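/- If a grid graph G = (V, E) with |V| = n and minimum degree at least 2 contains a Hamiltonian cycle, then the corresponding point set P of 5n points (each vertex v_i replaced by a center c_i on a grid of side length 3.4 together with four connectors at distance 1 from c_i along the four axis directions) admits a range assignment r with strongly connected induced graph and total interference exactly 9n: assign each center range 1, one connector per gadget (pointing along the outgoing Hamiltonian cycle edge) range 1.4, and all other connectors range 1. -/

import Mathlib

open scoped Classical

noncomputable section

abbrev Plane := EuclideanSpace ℝ (Fin 2)

/-- Adjacency in a grid graph: vertices of `ℤ × ℤ` at Euclidean distance exactly 1. -/
def GridAdj (u v : ℤ × ℤ) : Prop := (u.1 - v.1) ^ 2 + (u.2 - v.2) ^ 2 = 1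

/-- The center of the gadget of grid vertex `v`, on a grid of side length `3.4`. -/
def center (v : ℤ × ℤ) : Plane :=
  (3.4 * (v.1 : ℝ)) • EuclideanSpace.single 0 (1 : ℝ)
    + (3.4 * (v.2 : ℝ)) • EuclideanSpace.single 1 (1 : ℝ)

/-- The four unit-distance connectors of a gadget with center `c`. -/
def connectors (c : Plane) : Finset Plane :=
  {c + EuclideanSpace.single 0 1, c - EuclideanSpace.single 0 1,
   c + EuclideanSpace.single 1 1, c - EuclideanSpace.single 1 1}

/-- The gadget `P_i`: the center together with its four connectors. -/
def gadget (c : Plane) : Finset Plane := insert c (connectors c)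

/-- The point set of the reduction: one gadget of 5 points per grid vertex. -/
def reductionPoints (V : Finset (ℤ × ℤ)) : Finset Plane :=
  V.biUnion (fun v => gadget (center v))

/-- Total (sender-centric) interference of the graph induced by range assignment `r`. -/
def totalInterference (P : Finset Plane) (r : Plane → ℝ) : ℕ :=
  ∑ p ∈ P, (P.filter (fun q => q ≠ p ∧ dist p q ≤ r p)).card

/-!
Scaling by `5` puts all points of the reduction on the integer lattice (`3.4 = 17 / 5`), so
comparing distances with `1` and `1.4` becomes a finite integer check. Within distance `1` of a
center lie exactly its four connectors, and within distance `1` of a connector only its center;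
distance `1.4` reaches in addition the facing connector of the adjacent gadget, and nothing else
since `1.4 < √2`. Giving range `1.4` to the connector that points along the Hamiltonian cycle
therefore links each center to the next one, and every gadget contributes `4 + 2 + 1 + 1 + 1 = 9`
to the interference.
-/

theorem ZMod.reflTransGen_of_forall_add_one {α : Type*} {n : ℕ} [NeZero n]
    {R : α → α → Prop} {g : ZMod n → α} (h : ∀ k, Relation.ReflTransGen R (g k) (g (k + 1)))
    (k j : ZMod n) : Relation.ReflTransGen R (g k) (g j) := by
  have hreach : ∀ m : ℕ, Relation.ReflTransGen R (g k) (g (k + m)) := by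
    intro m
    induction m with
    | zero => simp [Relation.ReflTransGen.refl]
    | succ m ih => simpa [add_assoc] using ih.trans (h (k + m))
  simpa using hreach (j - k).val

lemma GridAdj.ne {u v : ℤ × ℤ} (h : GridAdj u v) : u ≠ v := by
  rintro rfl
  simp [GridAdj] at h

namespace GadgetReduction

open Finset

def gadgetOffsets : Finset (ℤ × ℤ) := {0, (1, 0), (-1, 0), (0, 1), (0, -1)}

lemma zero_mem_gadgetOffsets : (0 : ℤ × ℤ) ∈ gadgetOffsets := by decide

lemma neg_mem_gadgetOffsets {o : ℤ × ℤ} (ho : o ∈ gadgetOffsets) : -o ∈ gadgetOffsets := by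
  revert o
  decide

lemma abs_le_one_of_mem_gadgetOffsets {o : ℤ × ℤ} (ho : o ∈ gadgetOffsets) :
    |o.1| ≤ 1 ∧ |o.2| ≤ 1 := by
  revert o
  decide

lemma _root_.GridAdj.sub_mem_gadgetOffsets {u v : ℤ × ℤ} (h : GridAdj u v) :
    v - u ∈ gadgetOffsets := by
  have table : ∀ a ∈ Icc (-1 : ℤ) 1, ∀ b ∈ Icc (-1 : ℤ) 1, a ^ 2 + b ^ 2 = 1 →
      (a, b) ∈ gadgetOffsets := by
    decide
  unfold GridAdj at h
  have h1 : (v.1 - u.1) ^ 2 ≤ 1 := by nlinarith [sq_nonneg (u.2 - v.2)]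
  have h2 : (v.2 - u.2) ^ 2 ≤ 1 := by nlinarith [sq_nonneg (u.1 - v.1)]
  rw [sq_le_one_iff_abs_le_one, abs_le, ← mem_Icc] at h1 h2
  exact table _ h1 _ h2 (by linarith)

def gadgetPoint (v o : ℤ × ℤ) : Plane :=
  center v + (o.1 : ℝ) • EuclideanSpace.single 0 1 + (o.2 : ℝ) • EuclideanSpace.single 1 1

/-- Since `3.4 = 17 / 5`, this is `25 * dist (gadgetPoint (w + d) o) (gadgetPoint w o') ^ 2`. -/
def scaledSqDist (d o o' : ℤ × ℤ) : ℤ :=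
  (17 * d.1 + 5 * (o.1 - o'.1)) ^ 2 + (17 * d.2 + 5 * (o.2 - o'.2)) ^ 2

lemma gadget_center_eq_image (v : ℤ × ℤ) :
    gadget (center v) = gadgetOffsets.image (gadgetPoint v) := by
  simp only [gadget, connectors, gadgetOffsets, image_insert, image_singleton, gadgetPoint]
  congr 1 <;> simp [sub_eq_add_neg]

lemma reductionPoints_eq_image (V : Finset (ℤ × ℤ)) :
    reductionPoints V = (V ×ˢ gadgetOffsets).image (fun x => gadgetPoint x.1 x.2) := by
  ext p
  simp only [reductionPoints, gadget_center_eq_image, mem_biUnion, mem_image, mem_product,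
    Prod.exists, exists_and_left, and_assoc]

lemma mem_reductionPoints {V : Finset (ℤ × ℤ)} {p : Plane} :
    p ∈ reductionPoints V ↔ ∃ w ∈ V, ∃ o ∈ gadgetOffsets, gadgetPoint w o = p := by
  simp only [reductionPoints, gadget_center_eq_image, mem_biUnion, mem_image]

lemma dist_gadgetPoint (v o w o' : ℤ × ℤ) :
    dist (gadgetPoint v o) (gadgetPoint w o') = √(scaledSqDist (v - w) o o') / 5 := by
  rw [EuclideanSpace.dist_eq, Fin.sum_univ_two]
  have h : (scaledSqDist (v - w) o o' : ℝ) = 5 ^ 2 * ((gadgetPoint v o 0 - gadgetPoint w o' 0) ^ 2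
      + (gadgetPoint v o 1 - gadgetPoint w o' 1) ^ 2) := by
    simp [scaledSqDist, gadgetPoint, center]
    ring
  rw [h, Real.sqrt_mul' _ (by positivity), Real.sqrt_sq (by norm_num)]
  simp [Real.dist_eq, sq_abs]

lemma dist_gadgetPoint_le_iff (v o w o' : ℤ × ℤ) {c : ℝ} (hc : 0 ≤ c) :
    dist (gadgetPoint v o) (gadgetPoint w o') ≤ c / 5 ↔
      (scaledSqDist (v - w) o o' : ℝ) ≤ c ^ 2 := by
  rw [dist_gadgetPoint, div_le_div_iff_of_pos_right (by norm_num), Real.sqrt_le_left hc]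

lemma abs_le_one_of_scaledSqDist_le {d o o' : ℤ × ℤ} (ho : o ∈ gadgetOffsets)
    (ho' : o' ∈ gadgetOffsets) (h : scaledSqDist d o o' ≤ 49) : |d.1| ≤ 1 ∧ |d.2| ≤ 1 := by
  obtain ⟨ho1, ho2⟩ := abs_le_one_of_mem_gadgetOffsets ho
  obtain ⟨ho1', ho2'⟩ := abs_le_one_of_mem_gadgetOffsets ho'
  simp only [abs_le, scaledSqDist] at *
  refine ⟨⟨?_, ?_⟩, ?_, ?_⟩ <;> nlinarith

lemma scaledSqDist_le_iff_of_box {c : ℤ} (hc : c ≤ 49) {Q : ℤ × ℤ → ℤ × ℤ → ℤ × ℤ → Prop}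
    (hQ : ∀ d o o', o ∈ gadgetOffsets → Q d o o' → |d.1| ≤ 1 ∧ |d.2| ≤ 1)
    (hbox : ∀ a ∈ Icc (-1 : ℤ) 1, ∀ b ∈ Icc (-1 : ℤ) 1, ∀ o ∈ gadgetOffsets, ∀ o' ∈ gadgetOffsets,
      (scaledSqDist (a, b) o o' ≤ c ↔ Q (a, b) o o'))
    {d o o' : ℤ × ℤ} (ho : o ∈ gadgetOffsets) (ho' : o' ∈ gadgetOffsets) :
    scaledSqDist d o o' ≤ c ↔ Q d o o' := by
  by_cases hd : |d.1| ≤ 1 ∧ |d.2| ≤ 1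
  · simp only [abs_le, ← mem_Icc] at hd
    exact hbox d.1 hd.1 d.2 hd.2 o ho o' ho'
  · exact iff_of_false (fun h => hd (abs_le_one_of_scaledSqDist_le ho ho' (h.trans hc)))
      (fun h => hd (hQ d o o' ho h))

lemma scaledSqDist_le_zero_iff {d o o' : ℤ × ℤ} (ho : o ∈ gadgetOffsets)
    (ho' : o' ∈ gadgetOffsets) : scaledSqDist d o o' ≤ 0 ↔ d = 0 ∧ o' = o :=
  scaledSqDist_le_iff_of_box (Q := fun d o o' => d = 0 ∧ o' = o) (by norm_num)
    (by rintro d o o' - ⟨rfl, -⟩; decide) (by decide) ho ho'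

lemma scaledSqDist_le_25_iff {d o o' : ℤ × ℤ} (ho : o ∈ gadgetOffsets)
    (ho' : o' ∈ gadgetOffsets) :
    scaledSqDist d o o' ≤ 25 ↔ d = 0 ∧ (o' = o ∨ o = 0 ∨ o' = 0) :=
  scaledSqDist_le_iff_of_box (Q := fun d o o' => d = 0 ∧ (o' = o ∨ o = 0 ∨ o' = 0))
    (by norm_num) (by rintro d o o' - ⟨rfl, -⟩; decide) (by decide) ho ho'

lemma scaledSqDist_le_49_iff {d o o' : ℤ × ℤ} (ho : o ∈ gadgetOffsets)
    (ho' : o' ∈ gadgetOffsets) :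
    scaledSqDist d o o' ≤ 49 ↔
      (d = 0 ∧ (o' = o ∨ o = 0 ∨ o' = 0)) ∨ (o ≠ 0 ∧ d = -o ∧ o' = -o) := by
  refine scaledSqDist_le_iff_of_box
    (Q := fun d o o' => (d = 0 ∧ (o' = o ∨ o = 0 ∨ o' = 0)) ∨ (o ≠ 0 ∧ d = -o ∧ o' = -o))
    le_rfl ?_ (by decide) ho ho'
  rintro d o o' ho (⟨rfl, -⟩ | ⟨-, rfl, -⟩)
  · decide
  · simpa using abs_le_one_of_mem_gadgetOffsets ho

lemma gadgetPoint_inj {v o w o' : ℤ × ℤ} (ho : o ∈ gadgetOffsets) (ho' : o' ∈ gadgetOffsets) :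
    gadgetPoint v o = gadgetPoint w o' ↔ v = w ∧ o = o' := by
  refine ⟨fun h => ?_, fun ⟨hvw, hoo'⟩ => hvw ▸ hoo' ▸ rfl⟩
  have h0 := (dist_gadgetPoint_le_iff v o w o' le_rfl).mp (by simp [h])
  obtain ⟨hvw, hoo'⟩ := (scaledSqDist_le_zero_iff ho ho').mp (by exact_mod_cast (by simpa using h0))
  exact ⟨sub_eq_zero.mp hvw, hoo'.symm⟩

lemma dist_gadgetPoint_le_one_iff {v o w o' : ℤ × ℤ} (ho : o ∈ gadgetOffsets)
    (ho' : o' ∈ gadgetOffsets) :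
    dist (gadgetPoint v o) (gadgetPoint w o') ≤ 1 ↔ v = w ∧ (o' = o ∨ o = 0 ∨ o' = 0) := by
  rw [show (1 : ℝ) = 5 / 5 by norm_num, dist_gadgetPoint_le_iff v o w o' (by norm_num),
    ← sub_eq_zero (a := v), ← scaledSqDist_le_25_iff ho ho']
  norm_cast

lemma dist_gadgetPoint_le_one_point_four_iff {v o w o' : ℤ × ℤ} (ho : o ∈ gadgetOffsets)
    (ho' : o' ∈ gadgetOffsets) :
    dist (gadgetPoint v o) (gadgetPoint w o') ≤ 1.4 ↔
      (v = w ∧ (o' = o ∨ o = 0 ∨ o' = 0)) ∨ (o ≠ 0 ∧ w = v + o ∧ o' = -o) := by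
  have hsub : v - w = -o ↔ w = v + o := by rw [← neg_sub, neg_inj, sub_eq_iff_eq_add']
  rw [show (1.4 : ℝ) = 7 / 5 by norm_num, dist_gadgetPoint_le_iff v o w o' (by norm_num),
    ← sub_eq_zero (a := v), ← hsub, ← scaledSqDist_le_49_iff ho ho']
  norm_cast

def withinRange (P : Finset Plane) (p : Plane) (ρ : ℝ) : Finset Plane :=
  P.filter (fun q => q ≠ p ∧ dist p q ≤ ρ)

lemma totalInterference_reductionPoints (V : Finset (ℤ × ℤ)) (r : Plane → ℝ) :
    totalInterference (reductionPoints V) r = ∑ v ∈ V, ∑ o ∈ gadgetOffsets,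
      (withinRange (reductionPoints V) (gadgetPoint v o) (r (gadgetPoint v o))).card := by
  rw [← sum_product', totalInterference, reductionPoints_eq_image, sum_image,
    ← reductionPoints_eq_image]
  · rfl
  · rintro ⟨v, o⟩ hvo ⟨w, o'⟩ hwo' h
    rw [coe_product, Set.mem_prod] at hvo hwo'
    obtain ⟨rfl, rfl⟩ := (gadgetPoint_inj hvo.2 hwo'.2).mp h
    rfl

section Interference

variable {V : Finset (ℤ × ℤ)} {v o : ℤ × ℤ}

lemma withinRange_center (hv : v ∈ V) :
    withinRange (reductionPoints V) (gadgetPoint v 0) 1 =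
      (gadgetOffsets.erase 0).image (gadgetPoint v) := by
  ext q
  simp only [withinRange, mem_filter, mem_reductionPoints, mem_image, mem_erase]
  constructor
  · rintro ⟨⟨w, -, o', ho', rfl⟩, hne, hdist⟩
    obtain ⟨rfl, -⟩ := (dist_gadgetPoint_le_one_iff zero_mem_gadgetOffsets ho').mp hdist
    exact ⟨o', ⟨fun h => hne (h ▸ rfl), ho'⟩, rfl⟩
  · rintro ⟨o', ⟨ho'0, ho'⟩, rfl⟩
    refine ⟨⟨v, hv, o', ho', rfl⟩, ?_, ?_⟩
    · exact fun h => ho'0 ((gadgetPoint_inj ho' zero_mem_gadgetOffsets).mp h).2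
    · exact (dist_gadgetPoint_le_one_iff zero_mem_gadgetOffsets ho').mpr
        ⟨rfl, Or.inr (Or.inl rfl)⟩

lemma withinRange_connector (hv : v ∈ V) (ho : o ∈ gadgetOffsets) (ho0 : o ≠ 0) :
    withinRange (reductionPoints V) (gadgetPoint v o) 1 = {gadgetPoint v 0} := by
  ext q
  simp only [withinRange, mem_filter, mem_reductionPoints, mem_singleton]
  constructor
  · rintro ⟨⟨w, -, o', ho', rfl⟩, hne, hdist⟩
    obtain ⟨rfl, rfl | rfl | rfl⟩ := (dist_gadgetPoint_le_one_iff ho ho').mp hdist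
    · exact absurd rfl hne
    · exact absurd rfl ho0
    · rfl
  · rintro rfl
    refine ⟨⟨v, hv, 0, zero_mem_gadgetOffsets, rfl⟩, ?_, ?_⟩
    · exact fun h => ho0 ((gadgetPoint_inj zero_mem_gadgetOffsets ho).mp h).2.symm
    · exact (dist_gadgetPoint_le_one_iff ho zero_mem_gadgetOffsets).mpr
        ⟨rfl, Or.inr (Or.inr rfl)⟩

lemma withinRange_connector_of_add_mem (hv : v ∈ V) (ho : o ∈ gadgetOffsets) (ho0 : o ≠ 0)
    (hvo : v + o ∈ V) :
    withinRange (reductionPoints V) (gadgetPoint v o) 1.4 =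
      {gadgetPoint v 0, gadgetPoint (v + o) (-o)} := by
  ext q
  simp only [withinRange, mem_filter, mem_reductionPoints, mem_insert, mem_singleton]
  constructor
  · rintro ⟨⟨w, -, o', ho', rfl⟩, hne, hdist⟩
    rcases (dist_gadgetPoint_le_one_point_four_iff ho ho').mp hdist with
      ⟨rfl, rfl | rfl | rfl⟩ | ⟨-, rfl, rfl⟩
    · exact absurd rfl hne
    · exact absurd rfl ho0
    · exact Or.inl rfl
    · exact Or.inr rfl
  · have hno := neg_mem_gadgetOffsets ho
    rintro (rfl | rfl)
    · refine ⟨⟨v, hv, 0, zero_mem_gadgetOffsets, rfl⟩, ?_, ?_⟩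
      · exact fun h => ho0 ((gadgetPoint_inj zero_mem_gadgetOffsets ho).mp h).2.symm
      · exact (dist_gadgetPoint_le_one_point_four_iff ho zero_mem_gadgetOffsets).mpr
          (Or.inl ⟨rfl, Or.inr (Or.inr rfl)⟩)
    · refine ⟨⟨v + o, hvo, -o, hno, rfl⟩, ?_, ?_⟩
      · exact fun h => ho0 (by simpa using ((gadgetPoint_inj hno ho).mp h).1)
      · exact (dist_gadgetPoint_le_one_point_four_iff ho hno).mpr (Or.inr ⟨ho0, rfl, rfl⟩)

lemma sum_card_withinRange_gadget {d : ℤ × ℤ} {r : Plane → ℝ} (hv : v ∈ V)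
    (hd : d ∈ gadgetOffsets) (hd0 : d ≠ 0) (hvd : v + d ∈ V)
    (hr : ∀ o ∈ gadgetOffsets, r (gadgetPoint v o) = if o = d then 1.4 else 1) :
    ∑ o ∈ gadgetOffsets,
      (withinRange (reductionPoints V) (gadgetPoint v o) (r (gadgetPoint v o))).card = 9 := by
  have hcard : ∀ o ∈ gadgetOffsets,
      (withinRange (reductionPoints V) (gadgetPoint v o) (r (gadgetPoint v o))).card =
        if o = 0 then 4 else if o = d then 2 else 1 := by
    intro o ho
    rw [hr o ho]
    by_cases ho0 : o = 0
    · subst ho0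
      rw [if_neg (Ne.symm hd0), if_pos rfl, withinRange_center hv, card_image_of_injOn
        (fun x hx y hy h => ((gadgetPoint_inj (mem_of_mem_erase hx) (mem_of_mem_erase hy)).mp h).2),
        card_erase_of_mem zero_mem_gadgetOffsets]
      rfl
    by_cases hod : o = d
    · subst hod
      rw [if_pos rfl, if_neg ho0, if_pos rfl, withinRange_connector_of_add_mem hv ho ho0 hvd,
        card_pair]
      exact fun h => ho0 (by
        simpa using ((gadgetPoint_inj zero_mem_gadgetOffsets (neg_mem_gadgetOffsets ho)).mp h).1)
    · rw [if_neg hod, if_neg ho0, if_neg hod, withinRange_connector hv ho ho0, card_singleton]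
  have hsum : ∀ d ∈ gadgetOffsets, d ≠ 0 →
      ∑ o ∈ gadgetOffsets, (if o = 0 then 4 else if o = d then 2 else 1) = 9 := by
    decide
  rw [sum_congr rfl hcard, hsum d hd hd0]

end Interference

def InducedAdj (P : Finset Plane) (r : Plane → ℝ) (a b : Plane) : Prop :=
  a ∈ P ∧ b ∈ P ∧ dist a b ≤ r a

def hamiltonianRange {n : ℕ} (f : ZMod n → ℤ × ℤ) (p : Plane) : ℝ :=
  if ∃ k, gadgetPoint (f k) (f (k + 1) - f k) = p then 1.4 else 1

section HamiltonianCycle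

variable {n : ℕ} {V : Finset (ℤ × ℤ)} {f : ZMod n → ℤ × ℤ}

lemma one_le_hamiltonianRange (f : ZMod n → ℤ × ℤ) (p : Plane) : 1 ≤ hamiltonianRange f p := by
  unfold hamiltonianRange
  split_ifs <;> norm_num

lemma hamiltonianRange_gadgetPoint (hinj : Function.Injective f)
    (hadj : ∀ k, GridAdj (f k) (f (k + 1))) {k : ZMod n} {o : ℤ × ℤ} (ho : o ∈ gadgetOffsets) :
    hamiltonianRange f (gadgetPoint (f k) o) = if o = f (k + 1) - f k then 1.4 else 1 := by
  have hboost : (∃ j, gadgetPoint (f j) (f (j + 1) - f j) = gadgetPoint (f k) o) ↔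
      o = f (k + 1) - f k := by
    constructor
    · rintro ⟨j, h⟩
      obtain ⟨hjk, rfl⟩ := (gadgetPoint_inj (hadj j).sub_mem_gadgetOffsets ho).mp h
      rw [hinj hjk]
    · rintro rfl
      exact ⟨k, rfl⟩
  simp only [hamiltonianRange, hboost]

lemma reflTransGen_hamiltonianRange [NeZero n] (hmem : ∀ k, f k ∈ V)
    (hadj : ∀ k, GridAdj (f k) (f (k + 1))) (hsurj : ∀ v ∈ V, ∃ k, f k = v) :
    ∀ p ∈ reductionPoints V, ∀ q ∈ reductionPoints V,
      Relation.ReflTransGen (InducedAdj (reductionPoints V) (hamiltonianRange f)) p q := by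
  set R := InducedAdj (reductionPoints V) (hamiltonianRange f)
  have hR : ∀ k j o o', o ∈ gadgetOffsets → o' ∈ gadgetOffsets →
      dist (gadgetPoint (f k) o) (gadgetPoint (f j) o') ≤ hamiltonianRange f (gadgetPoint (f k) o) →
      R (gadgetPoint (f k) o) (gadgetPoint (f j) o') := fun k j o o' ho ho' h =>
    ⟨mem_reductionPoints.mpr ⟨f k, hmem k, o, ho, rfl⟩,
      mem_reductionPoints.mpr ⟨f j, hmem j, o', ho', rfl⟩, h⟩
  have hinner : ∀ k, ∀ o ∈ gadgetOffsets, ∀ o' ∈ gadgetOffsets, o = 0 ∨ o' = 0 →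
      R (gadgetPoint (f k) o) (gadgetPoint (f k) o') := fun k o ho o' ho' h =>
    hR k k o o' ho ho' (((dist_gadgetPoint_le_one_iff ho ho').mpr ⟨rfl, Or.inr h⟩).trans
      (one_le_hamiltonianRange f _))
  have hcross : ∀ k, R (gadgetPoint (f k) (f (k + 1) - f k))
      (gadgetPoint (f (k + 1)) (-(f (k + 1) - f k))) := by
    intro k
    have hd := (hadj k).sub_mem_gadgetOffsets
    refine hR k (k + 1) _ _ hd (neg_mem_gadgetOffsets hd) ?_
    rw [hamiltonianRange, if_pos ⟨k, rfl⟩, dist_gadgetPoint_le_one_point_four_iff hd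
      (neg_mem_gadgetOffsets hd)]
    exact Or.inr ⟨sub_ne_zero.mpr (hadj k).ne.symm, by abel, rfl⟩
  have hcenters : ∀ k j, Relation.ReflTransGen R (gadgetPoint (f k) 0) (gadgetPoint (f j) 0) := by
    refine ZMod.reflTransGen_of_forall_add_one fun k => ?_
    have hd := (hadj k).sub_mem_gadgetOffsets
    exact .head (hinner k 0 zero_mem_gadgetOffsets _ hd (Or.inl rfl)) <| .head (hcross k) <|
      .single (hinner _ _ (neg_mem_gadgetOffsets hd) 0 zero_mem_gadgetOffsets (Or.inr rfl))
  intro p hp q hq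
  obtain ⟨_, hv, o, ho, rfl⟩ := mem_reductionPoints.mp hp
  obtain ⟨_, hw, o', ho', rfl⟩ := mem_reductionPoints.mp hq
  obtain ⟨k, rfl⟩ := hsurj _ hv
  obtain ⟨j, rfl⟩ := hsurj _ hw
  exact .head (hinner k o ho 0 zero_mem_gadgetOffsets (Or.inr rfl)) <| (hcenters k j).tail <|
    hinner j 0 zero_mem_gadgetOffsets o' ho' (Or.inl rfl)

lemma totalInterference_hamiltonianRange (hinj : Function.Injective f) (hmem : ∀ k, f k ∈ V)
    (hadj : ∀ k, GridAdj (f k) (f (k + 1))) (hsurj : ∀ v ∈ V, ∃ k, f k = v) :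
    totalInterference (reductionPoints V) (hamiltonianRange f) = 9 * V.card := by
  rw [totalInterference_reductionPoints, sum_const_nat (m := 9), mul_comm]
  intro v hv
  obtain ⟨k, rfl⟩ := hsurj v hv
  exact sum_card_withinRange_gadget (hmem k) (hadj k).sub_mem_gadgetOffsets
    (sub_ne_zero.mpr (hadj k).ne.symm) (by simpa using hmem (k + 1))
    (fun o ho => hamiltonianRange_gadgetPoint hinj hadj ho)

end HamiltonianCycle

end GadgetReduction

open GadgetReduction

theorem hamiltonian_gives_9n_assignment_general (V : Finset (ℤ × ℤ)) (n : ℕ) (hn : n = V.card)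
    (ham : ∃ f : ZMod n → ℤ × ℤ, Function.Injective f ∧ (∀ k, f k ∈ V) ∧
      ∀ k : ZMod n, GridAdj (f k) (f (k + 1))) :
    ∃ r : Plane → ℝ, (∀ p, 0 ≤ r p) ∧
      (∀ p ∈ reductionPoints V, ∀ q ∈ reductionPoints V,
        Relation.ReflTransGen
          (fun a b => a ∈ reductionPoints V ∧ b ∈ reductionPoints V ∧ dist a b ≤ r a) p q) ∧
      totalInterference (reductionPoints V) r = 9 * n := by
  obtain ⟨f, hinj, hmem, hadj⟩ := ham
  have : NeZero n := ⟨fun h0 => (Finset.card_pos.mpr ⟨f 0, hmem 0⟩).ne (h0 ▸ hn)⟩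
  have hsurj : ∀ v ∈ V, ∃ k, f k = v := fun v hv => by
    obtain ⟨k, -, hk⟩ := Finset.surj_on_of_inj_on_of_card_le (s := Finset.univ) (fun k _ => f k)
      (fun k _ => hmem k) (fun _ _ _ _ h => hinj h)
      (by rw [Finset.card_univ, ZMod.card, hn]) v hv
    exact ⟨k, hk.symm⟩
  refine ⟨hamiltonianRange f, fun p => zero_le_one.trans (one_le_hamiltonianRange f p),
    reflTransGen_hamiltonianRange hmem hadj hsurj, ?_⟩
  rw [totalInterference_hamiltonianRange hinj hmem hadj hsurj, hn]

/-- if a grid graph `V` with minimum degree at least 2 has a Hamiltonian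
cycle, then the corresponding `5n`-point set admits a nonnegative range assignment whose
induced graph is strongly connected and whose total interference is exactly `9n`. -/
theorem hamiltonian_gives_9n_assignment (V : Finset (ℤ × ℤ)) (n : ℕ) (hn : n = V.card)
    (hn3 : 3 ≤ n)
    (hdeg : ∀ v ∈ V, 2 ≤ (V.filter (fun u => GridAdj u v)).card)
    (ham : ∃ f : ZMod n → ℤ × ℤ, Function.Injective f ∧ (∀ k, f k ∈ V) ∧
      ∀ k : ZMod n, GridAdj (f k) (f (k + 1))) :
    ∃ r : Plane → ℝ, (∀ p, 0 ≤ r p) ∧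
      (∀ p ∈ reductionPoints V, ∀ q ∈ reductionPoints V,
        Relation.ReflTransGen
          (fun a b => a ∈ reductionPoints V ∧ b ∈ reductionPoints V ∧ dist a b ≤ r a) p q) ∧
      totalInterference (reductionPoints V) r = 9 * n :=
  hamiltonian_gives_9n_assignment_general V n hn ham
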